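/- Fix a complex number h with h + 1 ≠ 0 and consider the Möbius map φ(w) = (w + h)/(w + h + 1) on ℂ. If h is not a real number in the interval (−4, 0), then the closed disc D = {w : |(2/a)w − z| ≤ 1} (for suitable a > 0, |z| = 1 determined by h as in the canonical parametrization) avoids the pole w = −h − 1 of φ, i.e., −h−1 ∉ D. -/

import Mathlib

/-!
Put `t = 1/ω`, `u = t + i` and `q = u² + a`. Then `h = -a²/q` and `z = (1 + it)/|u|`, with
`|u| = c = √(1 + t²) ≥ 1`. Multiplying the claim by `|a c q|` turns it into
`|a c q| < |2c(a² - q) - a(1 + it) q|`, and the difference of the squared sides equals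
`4c (c B + A)` for polynomials `A`, `B` in `a` and `t²`. Since `B ≥ 0` and `A + B` is a polynomial
in `t²` with positive coefficients, `c B + A = (c - 1) B + (A + B) > 0`.
-/

open Complex Real

lemma exp_I_mul_arctan (t : ℝ) :
    cexp (I * (arctan t : ℝ)) = (1 + t * I) / (√(1 + t ^ 2) : ℝ) := by
  have hc : (√(1 + t ^ 2) : ℂ) ≠ 0 := by
    exact_mod_cast (Real.sqrt_pos.2 (by positivity)).ne'
  rw [mul_comm, exp_mul_I, ← ofReal_cos, ← ofReal_sin, cos_arctan, sin_arctan, eq_div_iff hc]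
  push_cast
  field_simp

lemma sq_mul_div_quadratic_eq_neg_div (a ω : ℝ) (hω : ω ≠ 0) :
    (a : ℂ) ^ 2 * (I * ω) ^ 2 / ((1 - (a : ℂ)) * (I * ω) ^ 2 + 2 * (I * ω) + 1)
      = -(a ^ 2 / (((1 / ω : ℝ) + I) ^ 2 + a)) := by
  have hωC : (ω : ℂ) ≠ 0 := by exact_mod_cast hω
  have hscale : (1 - (a : ℂ)) * (I * ω) ^ 2 + 2 * (I * ω) + 1
      = ω ^ 2 * (((1 / ω : ℝ) + I) ^ 2 + a) := by
    push_cast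
    field_simp
    linear_combination (-ω ^ 2 * a) * I_sq
  rw [hscale, mul_pow, I_sq, mul_comm ((ω : ℂ) ^ 2), neg_one_mul, mul_neg, neg_div,
    mul_div_mul_right _ _ (pow_ne_zero 2 hωC)]

lemma quartic_pos_of_one_le (a c x : ℝ) (ha : 0 < a) (hc : 1 ≤ c) (hx : 0 ≤ x) :
    0 < c * ((a ^ 2 - a + 1 - x) ^ 2 + 4 * x)
      + (a * ((x - 1 + a) ^ 2 + 4 * x) + a ^ 3 * (1 + x) - a ^ 4) := by
  have hsum : ((a ^ 2 - a + 1 - x) ^ 2 + 4 * x)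
      + (a * ((x - 1 + a) ^ 2 + 4 * x) + a ^ 3 * (1 + x) - a ^ 4)
      = (a ^ 2 - a + 1) + (2 + 4 * a + a ^ 3) * x + (1 + a) * x ^ 2 := by ring
  have hB : 0 ≤ (c - 1) * ((a ^ 2 - a + 1 - x) ^ 2 + 4 * x) := by
    have := sub_nonneg.2 hc
    positivity
  have h0 : 0 < a ^ 2 - a + 1 := by nlinarith [sq_nonneg (a - 1)]
  have h1 : 0 ≤ (2 + 4 * a + a ^ 3) * x + (1 + a) * x ^ 2 := by positivity
  linarith

lemma norm_mul_lt_norm_cleared (a t : ℝ) (ha : 0 < a) :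
    ‖(a * √(1 + t ^ 2) : ℂ) * ((t + I) ^ 2 + a)‖
      < ‖2 * √(1 + t ^ 2) * (a ^ 2 - ((t + I) ^ 2 + a)) - a * (1 + t * I) * ((t + I) ^ 2 + a)‖ := by
  set c := √(1 + t ^ 2)
  have hc2 : c ^ 2 = 1 + t ^ 2 := Real.sq_sqrt (by positivity)
  have hc1 : 1 ≤ c := Real.one_le_sqrt.2 (by nlinarith [sq_nonneg t])
  have hdiff : (2 * c * (a ^ 2 - a + 1 - t ^ 2) + a * (t ^ 2 + 1 - a)) ^ 2
        + (4 * c * t + a * t * (t ^ 2 + 1 + a)) ^ 2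
        - (a * c) ^ 2 * ((t ^ 2 - 1 + a) ^ 2 + (2 * t) ^ 2)
      = 4 * c * (c * ((a ^ 2 - a + 1 - t ^ 2) ^ 2 + 4 * t ^ 2)
          + (a * ((t ^ 2 - 1 + a) ^ 2 + 4 * t ^ 2) + a ^ 3 * (1 + t ^ 2) - a ^ 4)) := by
    linear_combination (-a ^ 2 * ((t ^ 2 - 1 + a) ^ 2 + 4 * t ^ 2)) * hc2
  have hpos := mul_pos (by positivity : (0 : ℝ) < 4 * c)
    (quartic_pos_of_one_le a c (t ^ 2) ha hc1 (sq_nonneg t))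
  rw [← sq_lt_sq₀ (norm_nonneg _) (norm_nonneg _), Complex.sq_norm, Complex.sq_norm,
    normSq_apply, normSq_apply]
  simp only [pow_two, mul_re, ofReal_re, ofReal_im, mul_zero, sub_zero, add_re, I_re, add_zero,
    add_im, I_im, zero_add, mul_one, mul_im, zero_mul, one_mul, sub_re, re_ofNat, im_ofNat,
    sub_im, zero_sub, neg_add_rev, one_re, sub_self, one_im]
  linarith

lemma one_lt_norm_pole_sub (a t : ℝ) (ha : 0 < a) (ht : t ≠ 0) :
    1 < ‖(2 / (a : ℂ)) * (a ^ 2 / ((t + I) ^ 2 + a) - 1) - (1 + t * I) / (√(1 + t ^ 2) : ℝ)‖ := by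
  set c := √(1 + t ^ 2)
  set q : ℂ := (t + I) ^ 2 + a
  have hq : q ≠ 0 := fun hq0 => by
    have him := congrArg Complex.im hq0
    simp only [q, pow_two, add_im, mul_im, add_re, ofReal_re, I_re, add_zero, ofReal_im, I_im,
      zero_add, mul_one, one_mul, zero_im, add_self_eq_zero] at him
    exact ht him
  have hc : 0 < c := Real.sqrt_pos.2 (by positivity)
  have haC : (a : ℂ) ≠ 0 := by exact_mod_cast ha.ne'
  have hcC : (c : ℂ) ≠ 0 := by exact_mod_cast hc.ne'
  have hclear : (a * c : ℂ) * q * ((2 / (a : ℂ)) * (a ^ 2 / q - 1) - (1 + t * I) / c)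
      = 2 * c * (a ^ 2 - q) - a * (1 + t * I) * q := by
    field_simp
  have hnorm : ‖(a * c : ℂ) * q‖ * ‖(2 / (a : ℂ)) * (a ^ 2 / q - 1) - (1 + t * I) / c‖
      = ‖2 * c * (a ^ 2 - q) - a * (1 + t * I) * q‖ := by
    rw [← norm_mul, hclear]
  have hpos : 0 < ‖(a * c : ℂ) * q‖ := norm_pos_iff.2 (mul_ne_zero (mul_ne_zero haC hcC) hq)
  exact (lt_mul_iff_one_lt_right hpos).1 (hnorm ▸ norm_mul_lt_norm_cleared a t ha)

theorem stmt11_general (a ω : ℝ) (ha : 0 < a) (hω : ω ≠ 0)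
    (h : ℂ)
    (hh : h = (a : ℂ) ^ 2 * (Complex.I * ω) ^ 2 /
      ((1 - (a : ℂ)) * (Complex.I * ω) ^ 2 + 2 * (Complex.I * ω) + 1))
    (z : ℂ) (hz : z = Complex.exp (Complex.I * (Real.arctan (1 / ω) : ℝ))) :
    1 < ‖(2 / (a : ℂ)) * (-h - 1) - z‖ := by
  rw [hh, hz, sq_mul_div_quadratic_eq_neg_div a ω hω, neg_neg, exp_I_mul_arctan]
  exact one_lt_norm_pole_sub a (1 / ω) ha (one_div_ne_zero hω)

theorem stmt11 (a ω : ℝ) (ha : 0 < a) (hω : ω ≠ 0)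
    (hd : (1 - (a : ℂ)) * (Complex.I * ω) ^ 2 + 2 * (Complex.I * ω) + 1 ≠ 0)
    (h : ℂ)
    (hh : h = (a : ℂ) ^ 2 * (Complex.I * ω) ^ 2 /
      ((1 - (a : ℂ)) * (Complex.I * ω) ^ 2 + 2 * (Complex.I * ω) + 1))
    (z : ℂ) (hz : z = Complex.exp (Complex.I * (Real.arctan (1 / ω) : ℝ)))
    (hpole : h + 1 ≠ 0)
    (hstrip : ∀ r : ℝ, r ∈ Set.Ioo (-4 : ℝ) 0 → h ≠ (r : ℂ)) :
    1 < ‖(2 / (a : ℂ)) * (-h - 1) - z‖ :=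
  stmt11_general a ω ha hω h hh z hz
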